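/- arXiv:2305.19762 — 2 statements merged into one kernel-verified Lean document; each statement's English description precedes it below -/
import Mathlib

section
/- Let a : ℝ → ℝ be bounded measurable with 0 < ⌊a⌋ ≤ ⌈a⌉ < ∞ (least and upper means as liminf/limsup of averages). Then ⌊a⌋ = sup over A ∈ W^{1,∞}_loc(ℝ) ∩ L^∞(ℝ) of essinf_{τ∈ℝ} (a(τ) - A'(τ)). -/
open MeasureTheory intervalIntegral

/-- The least mean `⌊a⌋ = lim_{r→∞} inf_{t-s≥r} (1/(t-s)) ∫_s^t a`. -/
noncomputable def leastMean (a : ℝ → ℝ) : ℝ :=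
  ⨆ r : ℝ, ⨅ p : {p : ℝ × ℝ // r ≤ p.2 - p.1},
    ((p : ℝ × ℝ).2 - (p : ℝ × ℝ).1)⁻¹ * ∫ τ in (p : ℝ × ℝ).1..(p : ℝ × ℝ).2, a τ

/-- The upper mean `⌈a⌉ = lim_{r→∞} sup_{t-s≥r} (1/(t-s)) ∫_s^t a`. -/
noncomputable def upperMean (a : ℝ → ℝ) : ℝ :=
  ⨅ r : ℝ, ⨆ p : {p : ℝ × ℝ // r ≤ p.2 - p.1},
    ((p : ℝ × ℝ).2 - (p : ℝ × ℝ).1)⁻¹ * ∫ τ in (p : ℝ × ℝ).1..(p : ℝ × ℝ).2, a τ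

/-!
If `b ≤ a - A'` a.e. for a bounded locally Lipschitz `A`, then `A` is absolutely continuous and
`∫ₛᵗ a ≥ b (t - s) - 2 sup |A|`, so every such `b` is at most `⌊a⌋`. Conversely, let `F` be a
primitive of `a` and subtract from it its own mean over `[t, t + R]`: the result `A` is bounded
by `M R` (where `|a| ≤ M`), and `a - A'` is a.e. the mean of `a` over `[t, t + R]`, which is at
least the infimum of the means of `a` over windows of length `≥ R`. Letting `R → ∞` recovers
`⌊a⌋`.
-/

open Set Filter

theorem LocallyLipschitz.sub_le_integral_of_ae_deriv_le {A φ : ℝ → ℝ} (hA : LocallyLipschitz A)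
    {s t : ℝ} (hst : s ≤ t) (hφ : IntervalIntegrable φ volume s t)
    (h : ∀ᵐ τ, deriv A τ ≤ φ τ) : A t - A s ≤ ∫ τ in s..t, φ τ := by
  obtain ⟨K, hK⟩ :=
    (hA.locallyLipschitzOn (s := uIcc s t)).exists_lipschitzOnWith_of_compact isCompact_uIcc
  have hAC := hK.absolutelyContinuousOnInterval
  rw [← hAC.integral_deriv_eq_sub]
  exact integral_mono_ae hst hAC.intervalIntegrable_deriv hφ h

noncomputable def infAverage (a : ℝ → ℝ) (r : ℝ) : ℝ :=
  ⨅ p : {p : ℝ × ℝ // r ≤ p.2 - p.1},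
    ((p : ℝ × ℝ).2 - (p : ℝ × ℝ).1)⁻¹ * ∫ τ in (p : ℝ × ℝ).1..(p : ℝ × ℝ).2, a τ

theorem leastMean_eq_iSup_infAverage (a : ℝ → ℝ) : leastMean a = ⨆ r, infAverage a r := rfl

instance (r : ℝ) : Nonempty {p : ℝ × ℝ // r ≤ p.2 - p.1} := ⟨⟨(0, max r 0), by simp⟩⟩

theorem le_infAverage {a : ℝ → ℝ} {r c : ℝ}
    (h : ∀ s t, r ≤ t - s → c ≤ (t - s)⁻¹ * ∫ τ in s..t, a τ) : c ≤ infAverage a r :=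
  le_ciInf fun p => h _ _ p.2

section Bounded

variable {a : ℝ → ℝ} {M : ℝ}

theorem abs_integral_le_of_abs_le (hbd : ∀ t, |a t| ≤ M) (s t : ℝ) :
    |∫ τ in s..t, a τ| ≤ M * |t - s| :=
  norm_integral_le_of_norm_le_const (f := a) fun τ _ => hbd τ

theorem abs_average_le (hbd : ∀ t, |a t| ≤ M) (s t : ℝ) :
    |(t - s)⁻¹ * ∫ τ in s..t, a τ| ≤ M := by
  rcases eq_or_ne (t - s) 0 with h | h
  · simpa [h] using (abs_nonneg _).trans (hbd 0)
  · rw [abs_mul, abs_inv, inv_mul_le_iff₀ (abs_pos.2 h), mul_comm]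
    exact abs_integral_le_of_abs_le hbd s t

theorem infAverage_le (hbd : ∀ t, |a t| ≤ M) {r s t : ℝ} (hst : r ≤ t - s) :
    infAverage a r ≤ (t - s)⁻¹ * ∫ τ in s..t, a τ :=
  ciInf_le ⟨-M, by rintro _ ⟨p, rfl⟩; exact neg_le_of_abs_le (abs_average_le hbd _ _)⟩
    (⟨(s, t), hst⟩ : {p : ℝ × ℝ // r ≤ p.2 - p.1})

theorem infAverage_le_leastMean (hbd : ∀ t, |a t| ≤ M) (r : ℝ) : infAverage a r ≤ leastMean a := by
  rw [leastMean_eq_iSup_infAverage]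
  refine le_ciSup ⟨M, ?_⟩ r
  rintro _ ⟨r, rfl⟩
  have hr : r ≤ max r 0 - 0 := by simp
  exact (infAverage_le hbd hr).trans (le_of_abs_le (abs_average_le hbd _ _))

theorem intervalIntegrable_of_abs_le (hmeas : Measurable a) (hbd : ∀ t, |a t| ≤ M) (s t : ℝ) :
    IntervalIntegrable a volume s t :=
  (intervalIntegrable_const (c := M)).mono_fun' hmeas.aestronglyMeasurable (ae_of_all _ hbd)

theorem locallyIntegrable_of_abs_le (hmeas : Measurable a) (hbd : ∀ t, |a t| ≤ M) :
    LocallyIntegrable a volume :=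
  (locallyIntegrable_const M).mono hmeas.aestronglyMeasurable
    (ae_of_all _ fun t => (hbd t).trans (le_abs_self M))

theorem average_ge_of_ae_le_sub_deriv (hmeas : Measurable a) (hbd : ∀ t, |a t| ≤ M)
    {A : ℝ → ℝ} (hA : LocallyLipschitz A) {C : ℝ} (hC : ∀ t, |A t| ≤ C) {b : ℝ}
    (hb : ∀ᵐ τ, b ≤ a τ - deriv A τ) {s t : ℝ} (hst : s < t) :
    b - 2 * C / (t - s) ≤ (t - s)⁻¹ * ∫ τ in s..t, a τ := by
  have hint := intervalIntegrable_of_abs_le hmeas hbd s t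
  have hFTC : A t - A s ≤ ∫ τ in s..t, (a τ - b) :=
    hA.sub_le_integral_of_ae_deriv_le hst.le (hint.sub intervalIntegrable_const)
      (hb.mono fun τ hτ => by linarith)
  rw [integral_sub hint intervalIntegrable_const, intervalIntegral.integral_const,
    smul_eq_mul] at hFTC
  have hA2 : -(2 * C) ≤ A t - A s := by linarith [abs_le.1 (hC s), abs_le.1 (hC t)]
  rw [sub_le_iff_le_add, inv_mul_eq_div, ← add_div, le_div_iff₀ (sub_pos.2 hst)]
  linarith

theorem le_leastMean_of_ae_le_sub_deriv (hmeas : Measurable a) (hbd : ∀ t, |a t| ≤ M)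
    {A : ℝ → ℝ} (hA : LocallyLipschitz A) {C : ℝ} (hC : ∀ t, |A t| ≤ C) {b : ℝ}
    (hb : ∀ᵐ τ, b ≤ a τ - deriv A τ) : b ≤ leastMean a := by
  have hC0 : 0 ≤ C := (abs_nonneg _).trans (hC 0)
  have hlim : Tendsto (fun r : ℝ => b - 2 * C / r) atTop (nhds b) := by
    simpa using tendsto_const_nhds.sub
      ((tendsto_const_nhds (x := 2 * C)).div_atTop tendsto_id)
  refine le_of_tendsto hlim ?_
  filter_upwards [eventually_gt_atTop 0] with r hr
  calc b - 2 * C / r ≤ infAverage a r := le_infAverage fun s t hst => by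
        refine le_trans ?_ (average_ge_of_ae_le_sub_deriv hmeas hbd hA hC hb (by linarith))
        gcongr
    _ ≤ leastMean a := infAverage_le_leastMean hbd r

theorem essInf_sub_deriv_le_leastMean (hmeas : Measurable a) (hbd : ∀ t, |a t| ≤ M)
    (h0 : 0 ≤ leastMean a) {A : ℝ → ℝ} (hA : LocallyLipschitz A) {C : ℝ} (hC : ∀ t, |A t| ≤ C) :
    essInf (fun τ => a τ - deriv A τ) volume ≤ leastMean a := by
  by_cases hbdd : IsBoundedUnder (· ≥ ·) (ae volume) fun τ => a τ - deriv A τ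
  · exact le_leastMean_of_ae_le_sub_deriv hmeas hbd hA hC (ae_essInf_le hbdd)
  · -- `essInf` of a real function that is not essentially bounded below is the junk value `0`
    rwa [essInf, Real.liminf_of_not_isBoundedUnder hbdd]

theorem exists_locallyLipschitz_sub_deriv_ae_eq_average (hmeas : Measurable a)
    (hbd : ∀ t, |a t| ≤ M) {R : ℝ} (hR : 0 < R) :
    ∃ A : ℝ → ℝ, LocallyLipschitz A ∧ (∃ C, ∀ t, |A t| ≤ C) ∧
      ∀ᵐ t, a t - deriv A t = R⁻¹ * ∫ τ in t..t + R, a τ := by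
  have hM : 0 ≤ M := (abs_nonneg _).trans (hbd 0)
  have hint := intervalIntegrable_of_abs_le hmeas hbd
  set F : ℝ → ℝ := fun t => ∫ τ in 0..t, a τ
  have hF_sub (s t : ℝ) : F t - F s = ∫ τ in s..t, a τ :=
    integral_interval_sub_left (hint 0 t) (hint 0 s)
  have hF_lip : LipschitzWith M.toNNReal F := by
    refine LipschitzWith.of_dist_le_mul fun t s => ?_
    rw [Real.dist_eq, Real.dist_eq, Real.coe_toNNReal _ hM, hF_sub]
    exact abs_integral_le_of_abs_le hbd s t
  have hP (x : ℝ) : HasDerivAt (fun t => ∫ u in 0..t, F u) (F x) x :=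
    (hF_lip.continuous.integral_hasStrictDerivAt 0 x).hasDerivAt
  -- the mean of `F` over `[t, t + R]`, written through a primitive of `F` to differentiate it
  set H : ℝ → ℝ := fun t => R⁻¹ * ((∫ u in 0..t + R, F u) - ∫ u in 0..t, F u)
  have hH (t : ℝ) : HasDerivAt H (R⁻¹ * (F (t + R) - F t)) t :=
    (((hP (t + R)).comp_add_const t R).sub (hP t)).const_mul R⁻¹
  have hH_lip : LipschitzWith M.toNNReal H := by
    refine lipschitzWith_of_nnnorm_deriv_le (fun t => (hH t).differentiableAt) fun t => ?_
    rw [← NNReal.coe_le_coe, coe_nnnorm, (hH t).deriv, Real.norm_eq_abs, abs_mul, abs_inv,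
      abs_of_pos hR, inv_mul_le_iff₀ hR, Real.coe_toNNReal _ hM, hF_sub, mul_comm]
    simpa [abs_of_pos hR] using abs_integral_le_of_abs_le hbd t (t + R)
  refine ⟨fun t => F t - H t, (hF_lip.sub hH_lip).locallyLipschitz, ⟨M * R, fun t => ?_⟩, ?_⟩
  · have hFi (s u : ℝ) : IntervalIntegrable F volume s u := hF_lip.continuous.intervalIntegrable s u
    have hFH : F t - H t = R⁻¹ * ∫ u in t..t + R, (F t - F u) := by
      rw [integral_sub intervalIntegrable_const (hFi _ _), intervalIntegral.integral_const,
        smul_eq_mul, ← integral_interval_sub_left (hFi 0 _) (hFi 0 _)]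
      simp only [H]
      field_simp
      ring
    have hosc : ∀ u ∈ uIoc t (t + R), ‖F t - F u‖ ≤ M * R := by
      intro u hu
      rw [uIoc_of_le (by linarith)] at hu
      calc ‖F t - F u‖ ≤ M * |t - u| := by
            simpa [Real.dist_eq, Real.coe_toNNReal _ hM] using hF_lip.dist_le_mul t u
        _ ≤ M * R := by
            gcongr
            rw [abs_le]
            constructor <;> linarith [hu.1, hu.2]
    show |F t - H t| ≤ M * R
    rw [hFH, abs_mul, abs_inv, abs_of_pos hR, inv_mul_le_iff₀ hR]
    simpa [abs_of_pos hR, mul_comm] using norm_integral_le_of_norm_le_const hosc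
  · have hloc := locallyIntegrable_of_abs_le hmeas hbd
    filter_upwards [LocallyIntegrable.ae_hasDerivAt_integral hloc] with t ht
    have hderiv : HasDerivAt (fun t => F t - H t) (a t - R⁻¹ * (F (t + R) - F t)) t :=
      (ht 0).sub (hH t)
    rw [hderiv.deriv, hF_sub]
    ring

theorem exists_infAverage_le_essInf_sub_deriv (hmeas : Measurable a) (hbd : ∀ t, |a t| ≤ M)
    (r : ℝ) :
    ∃ A : ℝ → ℝ, LocallyLipschitz A ∧ (∃ C, ∀ t, |A t| ≤ C) ∧
      infAverage a r ≤ essInf (fun τ => a τ - deriv A τ) volume := by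
  set R := max r 1
  obtain ⟨A, hA, hA_bdd, hA_ae⟩ :=
    exists_locallyLipschitz_sub_deriv_ae_eq_average hmeas hbd (R := R) (by positivity)
  refine ⟨A, hA, hA_bdd, ?_⟩
  have havg (t : ℝ) : R⁻¹ * ∫ τ in t..t + R, a τ = (t + R - t)⁻¹ * ∫ τ in t..t + R, a τ := by
    rw [add_sub_cancel_left]
  have hcobdd : IsCoboundedUnder (· ≥ ·) (ae volume) fun t => R⁻¹ * ∫ τ in t..t + R, a τ :=
    IsBoundedUnder.isCoboundedUnder_flip <| isBoundedUnder_of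
      ⟨M, fun t => by rw [havg]; exact le_of_abs_le (abs_average_le hbd _ _)⟩
  rw [essInf_congr_ae hA_ae]
  refine le_essInf_of_ae_le _ (ae_of_all _ fun t => ?_) hcobdd
  simp only [havg]
  exact infAverage_le hbd (by simp [R])

end Bounded

theorem stmt2_general (a : ℝ → ℝ) (hmeas : Measurable a)
    (M : ℝ) (hbd : ∀ t, |a t| ≤ M)
    (h0 : 0 < leastMean a) :
    leastMean a =
      ⨆ A : {A : ℝ → ℝ // LocallyLipschitz A ∧ ∃ C, ∀ t, |A t| ≤ C},
        essInf (fun τ => a τ - deriv (A : ℝ → ℝ) τ) (volume : Measure ℝ) := by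
  have hle_leastMean (A : {A : ℝ → ℝ // LocallyLipschitz A ∧ ∃ C, ∀ t, |A t| ≤ C}) :
      essInf (fun τ => a τ - deriv (A : ℝ → ℝ) τ) volume ≤ leastMean a := by
    obtain ⟨A, hA, C, hC⟩ := A
    exact essInf_sub_deriv_le_leastMean hmeas hbd h0.le hA hC
  have hbdd : BddAbove (range fun A : {A : ℝ → ℝ // LocallyLipschitz A ∧ ∃ C, ∀ t, |A t| ≤ C} =>
      essInf (fun τ => a τ - deriv (A : ℝ → ℝ) τ) volume) :=
    ⟨_, forall_mem_range.2 hle_leastMean⟩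
  have : Nonempty {A : ℝ → ℝ // LocallyLipschitz A ∧ ∃ C, ∀ t, |A t| ≤ C} :=
    ⟨⟨0, LocallyLipschitz.const 0, 0, by simp⟩⟩
  refine le_antisymm (ciSup_le fun r => ?_) (ciSup_le hle_leastMean)
  obtain ⟨A, hA, hA_bdd, hr⟩ := exists_infAverage_le_essInf_sub_deriv hmeas hbd r
  exact hr.trans (le_ciSup hbdd ⟨A, hA, hA_bdd⟩)

theorem stmt2 (a : ℝ → ℝ) (hmeas : Measurable a)
    (M : ℝ) (hbd : ∀ t, |a t| ≤ M)
    (h0 : 0 < leastMean a) (hle : leastMean a ≤ upperMean a) :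
    leastMean a =
      ⨆ A : {A : ℝ → ℝ // LocallyLipschitz A ∧ ∃ C, ∀ t, |A t| ≤ C},
        essInf (fun τ => a τ - deriv (A : ℝ → ℝ) τ) (volume : Measure ℝ) :=
  stmt2_general a hmeas M hbd h0
end

section
/- Suppose a : ℝ → ℝ is measurable with 0 < ⌊a⌋ ≤ ⌈a⌉ < ∞ (least/upper mean). Then there exists T ≥ 1 such that for all s ∈ ℝ, 0 < ⌊a⌋T/2 < ∫_s^{s+T} a(τ) dτ < 2⌈a⌉T. -/
open MeasureTheory intervalIntegral

theorem stmt15 (a : ℝ → ℝ) (hmeas : Measurable a) (hloc : LocallyIntegrable a)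
    (M : ℝ) (hbd : ∀ t, |a t| ≤ M)
    (h0 : 0 < leastMean a) (hle : leastMean a ≤ upperMean a) :
    ∃ T : ℝ, 1 ≤ T ∧ ∀ s : ℝ,
      0 < leastMean a * T / 2 ∧
      leastMean a * T / 2 < ∫ τ in s..(s + T), a τ ∧
      (∫ τ in s..(s + T), a τ) < 2 * upperMean a * T := by
  classical
  set L := leastMean a with hLdef
  set U := upperMean a with hUdef
  have hU0 : 0 < U := lt_of_lt_of_le h0 hle
  have hM0 : 0 ≤ M := le_trans (abs_nonneg _) (hbd 0)
  -- the basic bound on means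
  have key : ∀ s t : ℝ, |(t - s)⁻¹ * ∫ τ in s..t, a τ| ≤ M := by
    intro s t
    rcases eq_or_ne t s with h | h
    · simp [h, hM0]
    · have hI : |∫ τ in s..t, a τ| ≤ M * |t - s| := by
        have := intervalIntegral.norm_integral_le_of_norm_le_const
          (C := M) (f := a) (a := s) (b := t) (fun x _ => by simpa using hbd x)
        simpa [Real.norm_eq_abs] using this
      have hts : 0 < |t - s| := abs_pos.2 (sub_ne_zero.2 h)
      rw [abs_mul, abs_inv]
      calc |t - s|⁻¹ * |∫ τ in s..t, a τ| ≤ |t - s|⁻¹ * (M * |t - s|) :=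
            mul_le_mul_of_nonneg_left hI (inv_nonneg.2 hts.le)
        _ = M := by field_simp
  -- abbreviation for the mean function on a subtype
  have hne : ∀ r : ℝ, Nonempty {p : ℝ × ℝ // r ≤ p.2 - p.1} := by
    intro r
    exact ⟨⟨(0, max r 0), by simp [le_max_left]⟩⟩
  have hbddB : ∀ r : ℝ, BddBelow (Set.range fun p : {p : ℝ × ℝ // r ≤ p.2 - p.1} =>
      ((p : ℝ × ℝ).2 - (p : ℝ × ℝ).1)⁻¹ * ∫ τ in (p : ℝ × ℝ).1..(p : ℝ × ℝ).2, a τ) := by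
    intro r
    refine ⟨-M, ?_⟩
    rintro x ⟨p, rfl⟩
    exact neg_le_of_abs_le (key _ _)
  have hbddA : ∀ r : ℝ, BddAbove (Set.range fun p : {p : ℝ × ℝ // r ≤ p.2 - p.1} =>
      ((p : ℝ × ℝ).2 - (p : ℝ × ℝ).1)⁻¹ * ∫ τ in (p : ℝ × ℝ).1..(p : ℝ × ℝ).2, a τ) := by
    intro r
    refine ⟨M, ?_⟩
    rintro x ⟨p, rfl⟩
    exact le_of_abs_le (key _ _)
  -- the outer sup/inf are bounded
  have hfA : BddAbove (Set.range fun r : ℝ =>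
      ⨅ p : {p : ℝ × ℝ // r ≤ p.2 - p.1},
        ((p : ℝ × ℝ).2 - (p : ℝ × ℝ).1)⁻¹ * ∫ τ in (p : ℝ × ℝ).1..(p : ℝ × ℝ).2, a τ) := by
    refine ⟨M, ?_⟩
    rintro x ⟨r, rfl⟩
    haveI := hne r
    obtain ⟨p⟩ := hne r
    exact le_trans (ciInf_le (hbddB r) p) (le_of_abs_le (key _ _))
  have hgB : BddBelow (Set.range fun r : ℝ =>
      ⨆ p : {p : ℝ × ℝ // r ≤ p.2 - p.1},
        ((p : ℝ × ℝ).2 - (p : ℝ × ℝ).1)⁻¹ * ∫ τ in (p : ℝ × ℝ).1..(p : ℝ × ℝ).2, a τ) := by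
    refine ⟨-M, ?_⟩
    rintro x ⟨r, rfl⟩
    haveI := hne r
    obtain ⟨p⟩ := hne r
    exact le_trans (neg_le_of_abs_le (key _ _)) (le_ciSup (hbddA r) p)
  -- extract r₀ with inf > L/2
  have hA : ∃ r₀ : ℝ, L / 2 < ⨅ p : {p : ℝ × ℝ // r₀ ≤ p.2 - p.1},
      ((p : ℝ × ℝ).2 - (p : ℝ × ℝ).1)⁻¹ * ∫ τ in (p : ℝ × ℝ).1..(p : ℝ × ℝ).2, a τ := by
    have hlt : L / 2 < L := by linarith
    rw [hLdef, leastMean] at hlt ⊢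
    exact (lt_ciSup_iff hfA).mp hlt
  have hB : ∃ r₁ : ℝ, (⨆ p : {p : ℝ × ℝ // r₁ ≤ p.2 - p.1},
      ((p : ℝ × ℝ).2 - (p : ℝ × ℝ).1)⁻¹ * ∫ τ in (p : ℝ × ℝ).1..(p : ℝ × ℝ).2, a τ) < 2 * U := by
    have hlt : U < 2 * U := by linarith
    rw [hUdef, upperMean] at hlt ⊢
    exact (ciInf_lt_iff hgB).mp hlt
  obtain ⟨r₀, hr₀⟩ := hA
  obtain ⟨r₁, hr₁⟩ := hB
  refine ⟨max 1 (max r₀ r₁), le_max_left _ _, fun s => ?_⟩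
  set T := max 1 (max r₀ r₁) with hT
  have hT1 : (1 : ℝ) ≤ T := le_max_left _ _
  have hTpos : 0 < T := lt_of_lt_of_le one_pos hT1
  have hTr₀ : r₀ ≤ T := le_trans (le_max_left _ _) (le_max_right _ _)
  have hTr₁ : r₁ ≤ T := le_trans (le_max_right _ _) (le_max_right _ _)
  have hsub : (s + T) - s = T := by ring
  have hp₀ : r₀ ≤ (s, s + T).2 - (s, s + T).1 := by simpa [hsub] using hTr₀
  have hp₁ : r₁ ≤ (s, s + T).2 - (s, s + T).1 := by simpa [hsub] using hTr₁
  have hlow : L / 2 < T⁻¹ * ∫ τ in s..(s + T), a τ := by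
    have := ciInf_le (hbddB r₀) (⟨(s, s + T), hp₀⟩ : {p : ℝ × ℝ // r₀ ≤ p.2 - p.1})
    simp only [hsub] at this
    exact lt_of_lt_of_le hr₀ (by simpa [hsub] using this)
  have hhigh : T⁻¹ * ∫ τ in s..(s + T), a τ < 2 * U := by
    have := le_ciSup (hbddA r₁) (⟨(s, s + T), hp₁⟩ : {p : ℝ × ℝ // r₁ ≤ p.2 - p.1})
    exact lt_of_le_of_lt (by simpa [hsub] using this) hr₁
  have hTI : T * (T⁻¹ * ∫ τ in s..(s + T), a τ) = ∫ τ in s..(s + T), a τ := by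
    field_simp
  refine ⟨by positivity, ?_, ?_⟩
  · have := mul_lt_mul_of_pos_left hlow hTpos
    rw [hTI] at this
    calc L * T / 2 = T * (L / 2) := by ring
      _ < _ := this
  · have := mul_lt_mul_of_pos_left hhigh hTpos
    rw [hTI] at this
    calc (∫ τ in s..(s + T), a τ) < T * (2 * U) := this
      _ = 2 * U * T := by ring
end
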